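/- arXiv:1909.07919 — 3 statements merged into one kernel-verified Lean document; each statement's English description precedes it below -/
import Mathlib

section
/- Let G be a multigraph with terminal set T ⊆ V, and let 𝒳 = (X_s)_{s∈T} be a T-subpartition (mutually disjoint sets with X_s ∩ T = {s}). Then the number of edge-disjoint T-paths in G is at most (1/2)[Σ_{s∈T} d(X_s) − odd(G∖𝒳)], where d(X) is the number of edges between X and V∖X, G∖𝒳 is the graph obtained by deleting all vertices in ⋃_s X_s, and odd counts connected components K of G∖𝒳 with d(K) odd. -/
open scoped Classical

/-- A finite multigraph without selfloops: edges carry an (arbitrary) orientation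
given by `src` and `tgt`, but are regarded as undirected. -/
structure Multigraph where
  V : Type
  E : Type
  [fV : Fintype V]
  [dV : DecidableEq V]
  [fE : Fintype E]
  [dE : DecidableEq E]
  src : E → V
  tgt : E → V
  noLoop : ∀ e, src e ≠ tgt e

attribute [instance] Multigraph.fV Multigraph.dV Multigraph.fE Multigraph.dE

namespace Multigraph

variable (G : Multigraph)

/-- the edge `e` joins the vertices `u` and `v` (in either orientation). -/
def Joins (e : G.E) (u v : G.V) : Prop :=
  (G.src e = u ∧ G.tgt e = v) ∨ (G.src e = v ∧ G.tgt e = u)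

/-- `δ(X)`: the set of edges with exactly one endpoint in `X`. -/
noncomputable def cutE (X : Set G.V) : Finset G.E :=
  Finset.univ.filter fun e =>
    (G.src e ∈ X ∧ G.tgt e ∉ X) ∨ (G.src e ∉ X ∧ G.tgt e ∈ X)

/-- `d(X) = |δ(X)|`. -/
noncomputable def d (X : Set G.V) : ℕ := (G.cutE X).card

/-- adjacency within the induced subgraph on `W`. -/
def adjOn (W : Set G.V) (u v : G.V) : Prop :=
  u ∈ W ∧ v ∈ W ∧ ∃ e, G.Joins e u v

/-- `K` is the vertex set of a connected component of the subgraph induced on `W`. -/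
def IsCompOf (W K : Set G.V) : Prop :=
  ∃ v ∈ W, K = {u | Relation.ReflTransGen (G.adjOn W) v u}

end Multigraph

/-- A `T`-path in `G`: a path whose two (distinct) endpoints are terminals of `T`
and whose internal vertices avoid `T`. -/
structure TPath (G : Multigraph) (T : Finset G.V) where
  verts : List G.V
  edges : List G.E
  hlen : verts.length = edges.length + 1
  hne : edges ≠ []
  hadj : ∀ i (h : i < edges.length),
    G.Joins (edges.get ⟨i, h⟩) (verts.get ⟨i, by omega⟩) (verts.get ⟨i + 1, by omega⟩)
  nodup : verts.Nodup
  first : G.V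
  last : G.V
  hfirst : verts.head? = some first
  hlast : verts.getLast? = some last
  hfirstT : first ∈ T
  hlastT : last ∈ T
  hinternal : ∀ i (h : i < verts.length), 0 < i → i < verts.length - 1 →
    verts.get ⟨i, h⟩ ∉ T

/-- a family of pairwise edge-disjoint `T`-paths. -/
def PairwiseEdgeDisjoint {G : Multigraph} {T : Finset G.V} {k : ℕ}
    (P : Fin k → TPath G T) : Prop :=
  ∀ i j, i ≠ j → ∀ e, e ∈ (P i).edges → e ∉ (P j).edges

/-- A `T`-subpartition: pairwise disjoint vertex sets `X s` (for `s ∈ T`)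
with `X s ∩ T = {s}`. -/
structure TSubpartition (G : Multigraph) (T : Finset G.V) where
  X : G.V → Set G.V
  hmem : ∀ s ∈ T, X s ∩ (T : Set G.V) = {s}
  hdisj : ∀ s ∈ T, ∀ t ∈ T, s ≠ t → Disjoint (X s) (X t)

namespace TSubpartition

variable {G : Multigraph} {T : Finset G.V} (𝒳 : TSubpartition G T)

/-- the vertex set of `G ∖ 𝒳`. -/
def rest : Set G.V := (⋃ s ∈ T, 𝒳.X s)ᶜ

noncomputable def dSum : ℕ := ∑ s ∈ T, G.d (𝒳.X s)

/-- number of odd components of `G ∖ 𝒳`. -/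
noncomputable def oddComps : ℕ :=
  {K : Set G.V | G.IsCompOf 𝒳.rest K ∧ Odd (G.d K)}.ncard

/-- `κ(𝒳) = (Σ_{s∈T} d(X_s) − odd(G∖𝒳)) / 2`. -/
noncomputable def kappa : ℚ := ((𝒳.dSum : ℚ) - (𝒳.oddComps : ℚ)) / 2

/-- `d(𝒳)`: the number of edges joining two distinct members of `𝒳`. -/
noncomputable def dCross : ℕ :=
  (Finset.univ.filter fun e =>
    ∃ s ∈ T, ∃ t ∈ T, s ≠ t ∧ G.src e ∈ 𝒳.X s ∧ G.tgt e ∈ 𝒳.X t).card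

end TSubpartition

namespace MaderProof
open Multigraph Finset

variable {G : Multigraph} {T : Finset G.V}

lemma joins_symm {e : G.E} {u v : G.V} (h : G.Joins e u v) : G.Joins e v u :=
  h.elim Or.inr Or.inl

lemma mem_cutE_iff {e : G.E} {X : Set G.V} {u v : G.V} (h : G.Joins e u v) :
    e ∈ G.cutE X ↔ ¬ ((u ∈ X) ↔ (v ∈ X)) := by
  simp only [Multigraph.cutE, Finset.mem_filter, Finset.mem_univ, true_and]
  rcases h with ⟨h1, h2⟩ | ⟨h1, h2⟩ <;> subst h1 <;> subst h2 <;> tauto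

lemma exists_step (Q : ℕ → Prop) : ∀ n, Q 0 → ¬ Q n → ∃ j, j < n ∧ Q j ∧ ¬ Q (j + 1)
  | 0, h, h' => absurd h h'
  | n+1, h, h' => by
    by_cases hq : Q n
    · exact ⟨n, Nat.lt_succ_self n, hq, h'⟩
    · obtain ⟨j, hj, h1, h2⟩ := exists_step Q n h hq
      exact ⟨j, hj.trans (Nat.lt_succ_self n), h1, h2⟩

variable (p : TPath G T)

lemma vlen : p.verts.length = p.edges.length + 1 := p.hlen

lemma elen_pos : 0 < p.edges.length := List.length_pos_iff.mpr p.hne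

/-- the `j`-th vertex of `p`, with junk value `p.first` out of range. -/
noncomputable def vtx (j : ℕ) : G.V := p.verts.getD j p.first

lemma vtx_eq {j : ℕ} (h : j < p.verts.length) : vtx p j = p.verts[j] := by
  simp [vtx, List.getD_eq_getElem?_getD, List.getElem?_eq_getElem h]

lemma vtx_zero : vtx p 0 = p.first := by
  have h0 : 0 < p.verts.length := by have := p.hlen; omega
  have h := p.hfirst
  rw [List.head?_eq_getElem?, List.getElem?_eq_getElem h0] at h
  rw [vtx_eq p h0]; exact Option.some_inj.mp h

lemma vtx_last : vtx p p.edges.length = p.last := by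
  have h0 : p.edges.length < p.verts.length := by have := p.hlen; omega
  have h := p.hlast
  rw [List.getLast?_eq_getElem?, p.hlen] at h
  simp only [Nat.add_sub_cancel] at h
  rw [List.getElem?_eq_getElem h0] at h
  rw [vtx_eq p h0]; exact Option.some_inj.mp h

lemma vtx_joins {j : ℕ} (h : j < p.edges.length) :
    G.Joins (p.edges[j]) (vtx p j) (vtx p (j + 1)) := by
  have hl := p.hlen
  have H := p.hadj j h
  simp only [List.get_eq_getElem] at H
  rwa [← vtx_eq p (by omega), ← vtx_eq p (by omega)] at H

lemma vtx_inj {j j' : ℕ} (hj : j ≤ p.edges.length) (hj' : j' ≤ p.edges.length)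
    (h : vtx p j = vtx p j') : j = j' := by
  have h1 : j < p.verts.length := by have := p.hlen; omega
  have h2 : j' < p.verts.length := by have := p.hlen; omega
  rw [vtx_eq p h1, vtx_eq p h2] at h
  exact (p.nodup.getElem_inj_iff).mp h

lemma edge_idx_inj {j j' : ℕ} (hj : j < p.edges.length) (hj' : j' < p.edges.length)
    (h : p.edges[j] = p.edges[j']) : j = j' := by
  have H1 := vtx_joins p hj
  have H2 := vtx_joins p hj'
  rw [h] at H1
  rcases H1 with ⟨a1, b1⟩ | ⟨a1, b1⟩ <;> rcases H2 with ⟨a2, b2⟩ | ⟨a2, b2⟩ <;>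
    [skip; skip; skip; skip] <;>
  · first
    | (have e1 := vtx_inj p (by omega) (by omega) (a1.symm.trans a2)
       have e2 := vtx_inj p (by omega) (by omega) (b1.symm.trans b2)
       omega)

lemma first_ne_last : p.first ≠ p.last := by
  intro h
  have := vtx_inj p (Nat.zero_le _) (le_refl _)
    (by rw [vtx_zero, vtx_last]; exact h)
  exact absurd this.symm (Nat.pos_iff_ne_zero.mp (elen_pos p))

lemma exists_cross_edge {X : Set G.V} (h0 : p.first ∈ X) (hn : p.last ∉ X) :
    ∃ e ∈ p.edges, e ∈ G.cutE X := by
  obtain ⟨j, hj, h1, h2⟩ := exists_step (fun j => vtx p j ∈ X) p.edges.length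
    (by show vtx p 0 ∈ X; rwa [vtx_zero]) (by show ¬ vtx p p.edges.length ∈ X; rwa [vtx_last])
  exact ⟨p.edges[j], List.getElem_mem hj,
    (mem_cutE_iff (vtx_joins p hj)).mpr (by tauto)⟩

lemma exists_cross_edge' {X : Set G.V} (h0 : p.first ∉ X) (hn : p.last ∈ X) :
    ∃ e ∈ p.edges, e ∈ G.cutE X := by
  obtain ⟨j, hj, h1, h2⟩ := exists_step (fun j => vtx p j ∉ X) p.edges.length
    (by show vtx p 0 ∉ X; rwa [vtx_zero]) (by show ¬ vtx p p.edges.length ∉ X; rw [vtx_last]; tauto)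
  exact ⟨p.edges[j], List.getElem_mem hj,
    (mem_cutE_iff (vtx_joins p hj)).mpr (by tauto)⟩

/-- parity lemma: the number of sign changes is even when the endpoints agree. -/
lemma parity_even (x : ℕ → Prop) (n : ℕ) (h : x 0 ↔ x n) :
    Even (((Finset.range n).filter fun j => ¬ (x j ↔ x (j + 1))).card) := by
  classical
  let f : ℕ → ZMod 2 := fun j => if x j then 1 else 0
  have key : ((((Finset.range n).filter fun j => ¬ (x j ↔ x (j + 1))).card : ZMod 2)) = 0 := by
    rw [Finset.natCast_card_filter]
    have : ∀ j ∈ Finset.range n,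
        (if ¬ (x j ↔ x (j + 1)) then (1 : ZMod 2) else 0) = f (j + 1) - f j := by
      intro j _
      by_cases h1 : x j <;> by_cases h2 : x (j + 1) <;> simp [f, h1, h2] <;> decide
    rw [Finset.sum_congr rfl this, Finset.sum_range_sub f n]
    by_cases h0 : x 0
    · simp [f, h0, h.mp h0]
    · have hn' : ¬ x n := fun hh => h0 (h.mpr hh)
      simp [f, h0, hn']
  rw [Nat.even_iff, ← Nat.dvd_iff_mod_eq_zero]
  exact (ZMod.natCast_eq_zero_iff _ 2).mp key

lemma path_even {K : Set G.V} (h0 : p.first ∉ K) (hn : p.last ∉ K) :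
    Even ((G.cutE K ∩ p.edges.toFinset).card) := by
  classical
  have hpar := parity_even (fun j => vtx p j ∈ K) p.edges.length
    (by show vtx p 0 ∈ K ↔ vtx p p.edges.length ∈ K; rw [vtx_zero, vtx_last]; tauto)
  have hcard : (((Finset.range p.edges.length).filter
      fun j => ¬ (vtx p j ∈ K ↔ vtx p (j + 1) ∈ K)).card)
      = (G.cutE K ∩ p.edges.toFinset).card := by
    apply Finset.card_bij (fun j hj => p.edges[j]'(by
      simpa using (Finset.mem_filter.mp hj).1))
    · intro j hj
      have hjn : j < p.edges.length := by simpa using (Finset.mem_filter.mp hj).1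
      have hx := (Finset.mem_filter.mp hj).2
      exact Finset.mem_inter.mpr ⟨(mem_cutE_iff (vtx_joins p hjn)).mpr hx,
        List.mem_toFinset.mpr (List.getElem_mem hjn)⟩
    · intro j hj j' hj' h
      have hjn : j < p.edges.length := by simpa using (Finset.mem_filter.mp hj).1
      have hjn' : j' < p.edges.length := by simpa using (Finset.mem_filter.mp hj').1
      exact edge_idx_inj p hjn hjn' h
    · intro e he
      obtain ⟨heK, hel⟩ := Finset.mem_inter.mp he
      obtain ⟨j, hjn, hje⟩ := List.getElem_of_mem (List.mem_toFinset.mp hel)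
      refine ⟨j, Finset.mem_filter.mpr ⟨Finset.mem_range.mpr hjn, ?_⟩, hje⟩
      have hJ := vtx_joins p hjn
      rw [hje] at hJ
      exact (mem_cutE_iff hJ).mp heK
  rw [← hcard]
  exact hpar

section Components

lemma comp_subset {W K : Set G.V} (h : G.IsCompOf W K) : K ⊆ W := by
  obtain ⟨v, hv, rfl⟩ := h
  intro u hu
  induction hu with
  | refl => exact hv
  | tail _ ha _ => exact ha.2.1

lemma comp_closed {W K : Set G.V} (h : G.IsCompOf W K) {u w : G.V}
    (hu : u ∈ K) (ha : G.adjOn W u w) : w ∈ K := by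
  obtain ⟨v, hv, rfl⟩ := h
  exact Relation.ReflTransGen.tail hu ha

lemma adjOn_symm {W : Set G.V} : Symmetric (G.adjOn W) :=
  fun _ _ ⟨h1, h2, e, he⟩ => ⟨h2, h1, e, joins_symm he⟩

lemma comp_eq {W K K' : Set G.V} (h : G.IsCompOf W K) (h' : G.IsCompOf W K')
    {u : G.V} (hu : u ∈ K) (hu' : u ∈ K') : K = K' := by
  obtain ⟨v, hv, rfl⟩ := h
  obtain ⟨v', hv', rfl⟩ := h'
  haveI : Std.Symm (G.adjOn W) := ⟨fun _ _ h => adjOn_symm h⟩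
  have hsym : ∀ {a b : G.V}, Relation.ReflTransGen (G.adjOn W) a b →
      Relation.ReflTransGen (G.adjOn W) b a := fun h => Std.Symm.symm _ _ h
  ext w
  constructor
  · exact fun hw => ((hu'.trans (hsym hu)).trans hw : _)
  · exact fun hw => ((hu.trans (hsym hu')).trans hw : _)

lemma not_mem_of_joins {W K : Set G.V} (h : G.IsCompOf W K) {u w : G.V} {e : G.E}
    (hu : u ∈ K) (hw : w ∉ K) (hj : G.Joins e u w) : w ∉ W :=
  fun hwW => hw (comp_closed h hu ⟨comp_subset h hu, hwW, e, hj⟩)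

lemma comp_inj (𝒳 : TSubpartition G T) {K K' : Set G.V}
    (hK : G.IsCompOf 𝒳.rest K) (hK' : G.IsCompOf 𝒳.rest K') {e : G.E}
    (he : e ∈ G.cutE K) (he' : e ∈ G.cutE K') : K = K' := by
  have hrest := comp_subset hK
  have hrest' := comp_subset hK'
  simp only [Multigraph.cutE, Finset.mem_filter, Finset.mem_univ, true_and] at he he'
  rcases he with ⟨h1, h2⟩ | ⟨h1, h2⟩ <;> rcases he' with ⟨h3, h4⟩ | ⟨h3, h4⟩
  · exact comp_eq hK hK' h1 h3
  · exact absurd (hrest' h4) (not_mem_of_joins hK h1 h2 (Or.inl ⟨rfl, rfl⟩))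
  · exact absurd (hrest' h3) (not_mem_of_joins hK h2 h1 (Or.inr ⟨rfl, rfl⟩))
  · exact comp_eq hK hK' h2 h4

lemma cut_to_X (𝒳 : TSubpartition G T) {K : Set G.V} (hK : G.IsCompOf 𝒳.rest K)
    {e : G.E} (he : e ∈ G.cutE K) : ∃ s ∈ T, e ∈ G.cutE (𝒳.X s) := by
  have hemem := he
  simp only [Multigraph.cutE, Finset.mem_filter, Finset.mem_univ, true_and] at hemem
  obtain ⟨u, w, hu, hw, hj⟩ : ∃ u w, u ∈ K ∧ w ∉ K ∧ G.Joins e u w := by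
    rcases hemem with ⟨h1, h2⟩ | ⟨h1, h2⟩
    · exact ⟨_, _, h1, h2, Or.inl ⟨rfl, rfl⟩⟩
    · exact ⟨_, _, h2, h1, Or.inr ⟨rfl, rfl⟩⟩
  have hwrest : w ∉ 𝒳.rest := not_mem_of_joins hK hu hw hj
  have hwmem : w ∈ ⋃ s ∈ T, 𝒳.X s := by
    by_contra h
    exact hwrest h
  simp only [Set.mem_iUnion, exists_prop] at hwmem
  obtain ⟨s, hs, hws⟩ := hwmem
  refine ⟨s, hs, (mem_cutE_iff (joins_symm hj)).mpr ?_⟩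
  have hurest : u ∈ 𝒳.rest := comp_subset hK hu
  have hus : u ∉ 𝒳.X s := fun h => hurest (Set.mem_biUnion hs h)
  tauto

end Components

lemma self_mem_X (𝒳 : TSubpartition G T) {s : G.V} (hs : s ∈ T) : s ∈ 𝒳.X s := by
  have h := 𝒳.hmem s hs
  have hss : s ∈ 𝒳.X s ∩ (T : Set G.V) := by rw [h]; rfl
  exact hss.1

lemma per_path (𝒳 : TSubpartition G T) (p : TPath G T) :
    2 ≤ ∑ s ∈ T, (G.cutE (𝒳.X s) ∩ p.edges.toFinset).card := by
  classical
  have hs := p.hfirstT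
  have ht := p.hlastT
  have hne := first_ne_last p
  have hdisj := 𝒳.hdisj p.first hs p.last ht hne
  have hfx : p.first ∈ 𝒳.X p.first := self_mem_X 𝒳 hs
  have hlx : p.last ∈ 𝒳.X p.last := self_mem_X 𝒳 ht
  have h1 : 1 ≤ (G.cutE (𝒳.X p.first) ∩ p.edges.toFinset).card := by
    obtain ⟨e, he1, he2⟩ := exists_cross_edge p hfx
      (fun h => Set.disjoint_left.mp hdisj h hlx)
    exact Finset.card_pos.mpr ⟨e, Finset.mem_inter.mpr ⟨he2, List.mem_toFinset.mpr he1⟩⟩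
  have h2 : 1 ≤ (G.cutE (𝒳.X p.last) ∩ p.edges.toFinset).card := by
    obtain ⟨e, he1, he2⟩ := exists_cross_edge' p
      (fun h => Set.disjoint_left.mp hdisj hfx h) hlx
    exact Finset.card_pos.mpr ⟨e, Finset.mem_inter.mpr ⟨he2, List.mem_toFinset.mpr he1⟩⟩
  have hsub : ({p.first, p.last} : Finset G.V) ⊆ T := by
    intro x hx
    simp only [Finset.mem_insert, Finset.mem_singleton] at hx
    rcases hx with rfl | rfl <;> assumption
  have hle := Finset.sum_le_sum_of_subset (f := fun s => (G.cutE (𝒳.X s) ∩ p.edges.toFinset).card) hsub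
  rw [Finset.sum_pair hne] at hle
  exact le_trans (by omega) hle

lemma partA {k : ℕ} (P : Fin k → TPath G T) (hP : PairwiseEdgeDisjoint P)
    (𝒳 : TSubpartition G T) (U : Finset G.E)
    (hU : ∀ i : Fin k, ∀ e ∈ (P i).edges, e ∈ U) :
    2 * k ≤ ∑ s ∈ T, (G.cutE (𝒳.X s) ∩ U).card := by
  classical
  have step1 : ∀ s : G.V, ∑ i : Fin k, (G.cutE (𝒳.X s) ∩ (P i).edges.toFinset).card
      ≤ (G.cutE (𝒳.X s) ∩ U).card := by
    intro s
    rw [← Finset.card_biUnion]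
    · apply Finset.card_le_card
      intro e he
      simp only [Finset.mem_biUnion] at he
      obtain ⟨i, _, he⟩ := he
      obtain ⟨hc, hm⟩ := Finset.mem_inter.mp he
      exact Finset.mem_inter.mpr ⟨hc, hU i e (List.mem_toFinset.mp hm)⟩
    · intro i _ j _ hij
      simp only [Finset.disjoint_left, Finset.mem_inter]
      rintro e ⟨-, he⟩ ⟨-, he'⟩
      exact hP i j hij e (List.mem_toFinset.mp he) (List.mem_toFinset.mp he')
  calc 2 * k = ∑ _i : Fin k, 2 := by simp [mul_comm]
    _ ≤ ∑ i : Fin k, ∑ s ∈ T, (G.cutE (𝒳.X s) ∩ (P i).edges.toFinset).card :=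
        Finset.sum_le_sum fun i _ => per_path 𝒳 (P i)
    _ = ∑ s ∈ T, ∑ i : Fin k, (G.cutE (𝒳.X s) ∩ (P i).edges.toFinset).card :=
        Finset.sum_comm
    _ ≤ ∑ s ∈ T, (G.cutE (𝒳.X s) ∩ U).card := Finset.sum_le_sum fun s _ => step1 s

lemma terminal_not_mem_rest (𝒳 : TSubpartition G T) {s : G.V} (hs : s ∈ T) :
    s ∉ 𝒳.rest :=
  fun h => h (Set.mem_biUnion hs (self_mem_X 𝒳 hs))

lemma odd_comp_unused {k : ℕ} (P : Fin k → TPath G T) (hP : PairwiseEdgeDisjoint P)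
    (𝒳 : TSubpartition G T) (U : Finset G.E)
    (hU : ∀ e, e ∈ U ↔ ∃ i, e ∈ (P i).edges)
    {K : Set G.V} (hK : G.IsCompOf 𝒳.rest K) (hodd : Odd (G.d K)) :
    ∃ e, e ∈ G.cutE K ∧ e ∉ U := by
  classical
  have hKrest := comp_subset hK
  have heven : Even ((G.cutE K ∩ U).card) := by
    have hdecomp : G.cutE K ∩ U
        = Finset.univ.biUnion (fun i : Fin k => G.cutE K ∩ (P i).edges.toFinset) := by
      ext e
      simp only [Finset.mem_inter, Finset.mem_biUnion, Finset.mem_univ, true_and,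
        List.mem_toFinset, hU]
      tauto
    rw [hdecomp, Finset.card_biUnion]
    · apply Finset.sum_induction _ Even (fun _ _ => Even.add) Even.zero
      intro i _
      apply path_even
      · exact fun h => terminal_not_mem_rest 𝒳 (P i).hfirstT (hKrest h)
      · exact fun h => terminal_not_mem_rest 𝒳 (P i).hlastT (hKrest h)
    · intro i _ j _ hij
      simp only [Finset.disjoint_left, Finset.mem_inter, List.mem_toFinset]
      rintro e ⟨-, he⟩ ⟨-, he'⟩
      exact hP i j hij e he he'
  have hsplit : (G.cutE K ∩ U).card + (G.cutE K \ U).card = G.d K :=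
    Finset.card_inter_add_card_sdiff _ _
  have hpos : 0 < (G.cutE K \ U).card := by
    rcases Nat.eq_zero_or_pos (G.cutE K \ U).card with h0 | h
    · exfalso
      rw [h0, Nat.add_zero] at hsplit
      rw [hsplit] at heven
      exact Nat.not_even_iff_odd.mpr hodd heven
    · exact h
  obtain ⟨e, he⟩ := Finset.card_pos.mp hpos
  obtain ⟨h1, h2⟩ := Finset.mem_sdiff.mp he
  exact ⟨e, h1, h2⟩

lemma partB {k : ℕ} (P : Fin k → TPath G T) (hP : PairwiseEdgeDisjoint P)
    (𝒳 : TSubpartition G T) (U : Finset G.E)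
    (hU : ∀ e, e ∈ U ↔ ∃ i, e ∈ (P i).edges) :
    𝒳.oddComps ≤ ∑ s ∈ T, ((G.cutE (𝒳.X s)) \ U).card := by
  classical
  set S : Set (Set G.V) := {K : Set G.V | G.IsCompOf 𝒳.rest K ∧ Odd (G.d K)} with hS
  rcases S.eq_empty_or_nonempty with hSe | ⟨K₀, hK₀⟩
  · have : 𝒳.oddComps = 0 := by
      rw [TSubpartition.oddComps, ← hS, hSe, Set.ncard_empty]
    omega
  · set B : Finset G.E := T.biUnion (fun s => (G.cutE (𝒳.X s)) \ U) with hB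
    have hex : ∀ K ∈ S, ∃ e, e ∈ G.cutE K ∧ e ∉ U :=
      fun K hK => odd_comp_unused P hP 𝒳 U hU hK.1 hK.2
    have hEne : Nonempty G.E := ⟨(hex K₀ hK₀).choose⟩
    let f : Set G.V → G.E := fun K =>
      if h : ∃ e, e ∈ G.cutE K ∧ e ∉ U then h.choose else Classical.arbitrary G.E
    have hf : ∀ K ∈ S, f K ∈ G.cutE K ∧ f K ∉ U := by
      intro K hK
      have h := hex K hK
      simp only [f, dif_pos h]
      exact h.choose_spec
    have hmaps : ∀ K ∈ S, f K ∈ (B : Set G.E) := by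
      intro K hK
      obtain ⟨hc, hnU⟩ := hf K hK
      obtain ⟨s, hs, hX⟩ := cut_to_X 𝒳 hK.1 hc
      simp only [Finset.coe_biUnion, Set.mem_iUnion, Finset.mem_coe, exists_prop, hB]
      exact ⟨s, hs, Finset.mem_sdiff.mpr ⟨hX, hnU⟩⟩
    have hinj : Set.InjOn f S := by
      intro K hK K' hK' hEq
      have h' := (hf K' hK').1
      rw [← hEq] at h'
      exact comp_inj 𝒳 hK.1 hK'.1 (hf K hK).1 h'
    have h1 : S.ncard ≤ (B : Set G.E).ncard :=
      Set.ncard_le_ncard_of_injOn f hmaps hinj (B.finite_toSet)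
    rw [Set.ncard_coe_finset] at h1
    calc 𝒳.oddComps = S.ncard := rfl
      _ ≤ B.card := h1
      _ ≤ ∑ s ∈ T, ((G.cutE (𝒳.X s)) \ U).card := Finset.card_biUnion_le

end MaderProof

/-- Lemma 2.1 (Mader bound): the number of pairwise edge-disjoint `T`-paths in `G`
is at most `κ(𝒳) = (Σ_{s∈T} d(X_s) − odd(G∖𝒳)) / 2` for every `T`-subpartition `𝒳`. -/
theorem edge_disjoint_TPaths_le_kappa (G : Multigraph) (T : Finset G.V)
    (𝒳 : TSubpartition G T) (k : ℕ) (P : Fin k → TPath G T)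
    (hP : PairwiseEdgeDisjoint P) :
    (k : ℚ) ≤ 𝒳.kappa := by
  classical
  set U : Finset G.E := Finset.univ.filter (fun e => ∃ i, e ∈ (P i).edges) with hUdef
  have hU : ∀ e, e ∈ U ↔ ∃ i, e ∈ (P i).edges := by
    intro e
    simp [hUdef]
  have hA := MaderProof.partA P hP 𝒳 U (fun i e he => (hU e).mpr ⟨i, he⟩)
  have hB := MaderProof.partB P hP 𝒳 U hU
  have hsplit : 𝒳.dSum = (∑ s ∈ T, (G.cutE (𝒳.X s) ∩ U).card)
      + ∑ s ∈ T, ((G.cutE (𝒳.X s)) \ U).card := by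
    rw [TSubpartition.dSum, ← Finset.sum_add_distrib]
    exact Finset.sum_congr rfl fun s _ => (Finset.card_inter_add_card_sdiff _ _).symm
  have key : 2 * k + 𝒳.oddComps ≤ 𝒳.dSum := by omega
  rw [TSubpartition.kappa, le_div_iff₀ (by norm_num : (0:ℚ) < 2)]
  have hq : ((2 * k + 𝒳.oddComps : ℕ) : ℚ) ≤ (𝒳.dSum : ℚ) := by exact_mod_cast key
  push_cast at hq
  linarith
end

section
/- If there are k pairwise edge-disjoint T-paths in G and 𝒳 is a T-subpartition, then k ≤ d(𝒳) + Σ_{K∈𝒦} ⌊d(K)/2⌋, where 𝒦 is the collection of vertex sets of connected components of G∖𝒳 and d(𝒳) is the number of edges between distinct members of 𝒳. -/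
open scoped Classical

/-!
A `T`-path runs from `X_s` to `X_t` for distinct terminals `s ≠ t`. If it never enters `G ∖ 𝒳`,
it must step from `X_s` straight into another member of `𝒳`, along an edge counted by `d(𝒳)`.
Otherwise, from a vertex in a component `K` of `G ∖ 𝒳` it has to leave `K` both towards its start
and towards its end, so it uses two edges of `δ(K)`. Since the paths are edge-disjoint, at most
`d(𝒳)` of them are of the first kind and at most `⌊d(K)/2⌋` of them use two edges of `δ(K)`.
-/

open Finset Function

theorem Nat.exists_mem_Ico_and_not_succ {p : ℕ → Prop} {a b : ℕ} (ha : p a) (hb : ¬p b)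
    (hab : a ≤ b) : ∃ j ∈ Set.Ico a b, p j ∧ ¬p (j + 1) := by
  induction b, hab using Nat.le_induction with
  | base => exact absurd ha hb
  | succ b hab ih =>
    by_cases hpb : p b
    · exact ⟨b, ⟨hab, b.lt_succ_self⟩, hpb, hb⟩
    · obtain ⟨j, hj, hpj, hpj1⟩ := ih hpb
      exact ⟨j, ⟨hj.1, hj.2.trans b.lt_succ_self⟩, hpj, hpj1⟩

theorem Nat.exists_mem_Ico_not_and_succ {p : ℕ → Prop} {a b : ℕ} (ha : ¬p a) (hb : p b)
    (hab : a ≤ b) : ∃ j ∈ Set.Ico a b, ¬p j ∧ p (j + 1) := by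
  simpa only [not_not] using
    Nat.exists_mem_Ico_and_not_succ (p := fun j => ¬p j) ha (not_not.2 hb) hab

section Counting

variable {ι α κ : Type*} [DecidableEq α] {E : ι → Finset α}

theorem mul_card_le_card_of_pairwise_disjoint (hE : Pairwise (Disjoint on E)) {I : Finset ι}
    {F : Finset α} {m : ℕ} (h : ∀ i ∈ I, m ≤ #(E i ∩ F)) : m * #I ≤ #F :=
  calc m * #I = ∑ _i ∈ I, m := by rw [sum_const, smul_eq_mul, mul_comm]
    _ ≤ ∑ i ∈ I, #(E i ∩ F) := sum_le_sum h
    _ = #(I.biUnion fun i => E i ∩ F) :=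
      (card_biUnion fun _ _ _ _ hij => (hE hij).mono inter_subset_left inter_subset_left).symm
    _ ≤ #F := card_le_card (biUnion_subset.2 fun _ _ => inter_subset_right)

theorem card_le_card_add_sum_div_two [Fintype ι] (hE : Pairwise (Disjoint on E)) (C : Finset α)
    (S : Finset κ) (D : κ → Finset α)
    (h : ∀ i, (E i ∩ C).Nonempty ∨ ∃ K ∈ S, 2 ≤ #(E i ∩ D K)) :
    Fintype.card ι ≤ #C + ∑ K ∈ S, #(D K) / 2 := by
  classical
  set A := univ.filter fun i => (E i ∩ C).Nonempty
  set B := fun K => univ.filter fun i => 2 ≤ #(E i ∩ D K)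
  have hcover : univ ⊆ A ∪ S.biUnion B := fun i _ => by simpa [A, B] using h i
  have hA : #A ≤ #C := by
    simpa using mul_card_le_card_of_pairwise_disjoint hE (m := 1) (I := A)
      fun i hi => card_pos.2 (mem_filter.1 hi).2
  have hB : ∀ K ∈ S, #(B K) ≤ #(D K) / 2 := fun K _ =>
    (Nat.le_div_iff_mul_le two_pos).2 <| by
      rw [mul_comm]; exact mul_card_le_card_of_pairwise_disjoint hE fun i hi => (mem_filter.1 hi).2
  calc Fintype.card ι = #(univ : Finset ι) := rfl
    _ ≤ #A + #(S.biUnion B) := (card_le_card hcover).trans (card_union_le _ _)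
    _ ≤ #A + ∑ K ∈ S, #(B K) := by gcongr; exact card_biUnion_le
    _ ≤ #C + ∑ K ∈ S, #(D K) / 2 := add_le_add hA (sum_le_sum hB)

end Counting

namespace Multigraph

variable {G : Multigraph} {e : G.E} {u v u' v' : G.V}

theorem Joins.symm (h : G.Joins e u v) : G.Joins e v u :=
  h.elim Or.inr Or.inl

theorem Joins.eq_or_eq (h : G.Joins e u v) (h' : G.Joins e u' v') : u = u' ∨ u = v' := by
  rcases h with ⟨rfl, rfl⟩ | ⟨rfl, rfl⟩ <;> rcases h' with ⟨_, _⟩ | ⟨_, _⟩ <;> tauto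

theorem Joins.mem_cutE {X : Set G.V} (h : G.Joins e u v) (hu : u ∈ X) (hv : v ∉ X) :
    e ∈ G.cutE X := by
  simp only [cutE, mem_filter, mem_univ, true_and]
  rcases h with ⟨rfl, rfl⟩ | ⟨rfl, rfl⟩ <;> tauto

theorem IsCompOf.subset {W K : Set G.V} (h : G.IsCompOf W K) : K ⊆ W := by
  obtain ⟨v, hv, rfl⟩ := h
  intro u hu
  induction hu with
  | refl => exact hv
  | tail _ huw => exact huw.2.1

end Multigraph

namespace TSubpartition

variable {G : Multigraph} {T : Finset G.V} (𝒳 : TSubpartition G T)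

noncomputable def crossE : Finset G.E :=
  univ.filter fun e => ∃ s ∈ T, ∃ t ∈ T, s ≠ t ∧ G.src e ∈ 𝒳.X s ∧ G.tgt e ∈ 𝒳.X t

theorem dCross_eq_card_crossE : 𝒳.dCross = #𝒳.crossE := rfl

variable {𝒳}

theorem mem_crossE_of_joins {e : G.E} {u v s t : G.V} (h : G.Joins e u v) (hs : s ∈ T)
    (ht : t ∈ T) (hst : s ≠ t) (hu : u ∈ 𝒳.X s) (hv : v ∈ 𝒳.X t) : e ∈ 𝒳.crossE := by
  simp only [crossE, mem_filter, mem_univ, true_and]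
  rcases h with ⟨rfl, rfl⟩ | ⟨rfl, rfl⟩
  · exact ⟨s, hs, t, ht, hst, hu, hv⟩
  · exact ⟨t, ht, s, hs, hst.symm, hv, hu⟩

theorem mem_X_self {s : G.V} (hs : s ∈ T) : s ∈ 𝒳.X s :=
  (𝒳.hmem s hs).ge rfl |>.1

theorem notMem_rest_iff {v : G.V} : v ∉ 𝒳.rest ↔ ∃ s ∈ T, v ∈ 𝒳.X s := by
  simp [rest]

theorem notMem_rest_of_mem {s : G.V} (hs : s ∈ T) : s ∉ 𝒳.rest :=
  notMem_rest_iff.2 ⟨s, hs, mem_X_self hs⟩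

end TSubpartition

namespace TPath

open TSubpartition

variable {G : Multigraph} {T : Finset G.V} (p : TPath G T)

/-- The vertices of `p`, indexed from `0` to `p.edges.length`; junk (`p.first`) beyond. -/
noncomputable def vert (j : ℕ) : G.V := p.verts.getD j p.first

theorem vert_eq_getElem {j : ℕ} (h : j < p.verts.length) : p.vert j = p.verts[j] := by
  simp [vert, h]

theorem vert_zero : p.vert 0 = p.first := by
  simp [vert, List.getD_eq_getElem?_getD, ← List.head?_eq_getElem?, p.hfirst]

theorem vert_length_edges : p.vert p.edges.length = p.last := by
  simpa [vert, List.getLast?_eq_getElem?, p.hlen] using p.hlast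

theorem joins_vert {j : ℕ} (h : j < p.edges.length) :
    G.Joins p.edges[j] (p.vert j) (p.vert (j + 1)) := by
  have := p.hlen
  simpa [vert_eq_getElem p (j := j) (by omega), vert_eq_getElem p (j := j + 1) (by omega)]
    using p.hadj j h

theorem vert_injOn : Set.InjOn p.vert (Set.Iic p.edges.length) := by
  intro i hi j hj hij
  have := p.hlen
  simp only [Set.mem_Iic] at hi hj
  rw [p.vert_eq_getElem (by omega), p.vert_eq_getElem (by omega)] at hij
  exact (p.nodup.getElem_inj_iff).1 hij

theorem first_ne_last : p.first ≠ p.last := by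
  rw [← p.vert_zero, ← p.vert_length_edges]
  intro h
  exact (List.length_pos_iff.2 p.hne).ne (p.vert_injOn (by simp) (by simp) h)

theorem edges_nodup : p.edges.Nodup := by
  rw [List.nodup_iff_injective_getElem]
  rintro ⟨i, hi⟩ ⟨j, hj⟩ hij
  simp only [Fin.mk.injEq] at hij ⊢
  have hi' := p.joins_vert hi
  have hj' := p.joins_vert hj
  rw [hij] at hi'
  have inj {x y : ℕ} (hx : x ≤ p.edges.length) (hy : y ≤ p.edges.length)
      (h : p.vert x = p.vert y) : x = y :=
    p.vert_injOn hx hy h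
  have := (hi'.eq_or_eq hj').imp (inj (by omega) (by omega)) (inj (by omega) (by omega))
  have := (hj'.eq_or_eq hi').imp (inj (by omega) (by omega)) (inj (by omega) (by omega))
  omega

theorem two_le_card_inter_of_getElem_mem {F : Finset G.E} {a b : ℕ} (hab : a < b)
    (hb : b < p.edges.length) (ha : p.edges[a] ∈ F) (hb' : p.edges[b] ∈ F) :
    2 ≤ #(p.edges.toFinset ∩ F) := by
  have hne : p.edges[a] ≠ p.edges[b] := fun h => hab.ne (p.edges_nodup.getElem_inj_iff.1 h)
  calc 2 = #{p.edges[a], p.edges[b]} := (card_pair hne).symm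
    _ ≤ #(p.edges.toFinset ∩ F) := card_le_card <| by
      simp [insert_subset_iff, ha, hb', List.getElem_mem]

theorem exists_isCompOf_two_le_card_cutE {W : Set G.V} (hfirst : p.first ∉ W)
    (hlast : p.last ∉ W) {i : ℕ} (hi : p.vert i ∈ W) (hin : i ≤ p.edges.length) :
    ∃ K, G.IsCompOf W K ∧ 2 ≤ #(p.edges.toFinset ∩ G.cutE K) := by
  set K := {u | Relation.ReflTransGen (G.adjOn W) (p.vert i) u}
  have hK : G.IsCompOf W K := ⟨_, hi, rfl⟩
  have hiK : p.vert i ∈ K := Relation.ReflTransGen.refl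
  obtain ⟨a, ha, haK, ha1K⟩ := Nat.exists_mem_Ico_not_and_succ (p := (p.vert · ∈ K))
    (fun h => hfirst (p.vert_zero ▸ hK.subset h)) hiK i.zero_le
  obtain ⟨b, hb, hbK, hb1K⟩ := Nat.exists_mem_Ico_and_not_succ (p := (p.vert · ∈ K)) hiK
    (fun h => hlast (p.vert_length_edges ▸ hK.subset h)) hin
  exact ⟨K, hK, p.two_le_card_inter_of_getElem_mem (ha.2.trans_le hb.1) hb.2
    ((p.joins_vert _).symm.mem_cutE ha1K haK) ((p.joins_vert _).mem_cutE hbK hb1K)⟩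

theorem crossE_nonempty_of_forall_notMem_rest (𝒳 : TSubpartition G T)
    (h : ∀ j ≤ p.edges.length, p.vert j ∉ 𝒳.rest) :
    (p.edges.toFinset ∩ 𝒳.crossE).Nonempty := by
  have hlast : p.last ∉ 𝒳.X p.first := fun h =>
    Set.disjoint_left.1 (𝒳.hdisj _ p.hfirstT _ p.hlastT p.first_ne_last) h
      (mem_X_self p.hlastT)
  obtain ⟨j, hj, hjX, hj1X⟩ := Nat.exists_mem_Ico_and_not_succ
    (p := (p.vert · ∈ 𝒳.X p.first)) (p.vert_zero.symm ▸ mem_X_self p.hfirstT)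
    (p.vert_length_edges ▸ hlast) (Nat.zero_le _)
  obtain ⟨t, ht, hj1t⟩ := notMem_rest_iff.1 (h (j + 1) hj.2)
  refine ⟨p.edges[j]'hj.2, mem_inter.2 ⟨List.mem_toFinset.2 (List.getElem_mem _), ?_⟩⟩
  exact mem_crossE_of_joins (p.joins_vert hj.2) p.hfirstT ht (by rintro rfl; exact hj1X hj1t)
    hjX hj1t

theorem crossE_nonempty_or_exists_two_le_card_cutE (𝒳 : TSubpartition G T) :
    (p.edges.toFinset ∩ 𝒳.crossE).Nonempty ∨
      ∃ K, G.IsCompOf 𝒳.rest K ∧ 2 ≤ #(p.edges.toFinset ∩ G.cutE K) := by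
  by_cases h : ∃ i ≤ p.edges.length, p.vert i ∈ 𝒳.rest
  · obtain ⟨i, hin, hi⟩ := h
    exact .inr <| p.exists_isCompOf_two_le_card_cutE (notMem_rest_of_mem p.hfirstT)
      (notMem_rest_of_mem p.hlastT) hi hin
  · push Not at h
    exact .inl (p.crossE_nonempty_of_forall_notMem_rest 𝒳 h)

end TPath

/-- If there are `k` pairwise edge-disjoint `T`-paths and `𝒳` is a `T`-subpartition,
then `k ≤ d(𝒳) + Σ_{K∈𝒦} ⌊d(K)/2⌋`. -/
theorem edge_disjoint_TPaths_le_dCross_add (G : Multigraph) (T : Finset G.V)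
    (𝒳 : TSubpartition G T) (k : ℕ) (P : Fin k → TPath G T)
    (hP : PairwiseEdgeDisjoint P) :
    k ≤ 𝒳.dCross + ∑ᶠ K ∈ {K : Set G.V | G.IsCompOf 𝒳.rest K}, G.d K / 2 := by
  have hS : {K : Set G.V | G.IsCompOf 𝒳.rest K}.Finite := Set.toFinite _
  have hE : Pairwise (Disjoint on fun i => (P i).edges.toFinset) := fun i j hij =>
    disjoint_left.2 fun e hi hj => hP i j hij e (List.mem_toFinset.1 hi) (List.mem_toFinset.1 hj)
  rw [finsum_mem_eq_finite_toFinset_sum _ hS, 𝒳.dCross_eq_card_crossE]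
  simpa [Multigraph.d] using card_le_card_add_sum_div_two hE 𝒳.crossE hS.toFinset G.cutE
    fun i => by simpa using (P i).crossE_nonempty_or_exists_two_le_card_cutE 𝒳
end

section
/- For a network N = (G,T,c), the value of any integral multiflow 𝓕 is at most κ_c(𝒳) = (1/2)[Σ_{s∈T} d_c(X_s) − odd_c(G∖𝒳)] for every T-subpartition 𝒳. -/
open scoped Classical

/-- An integral multiflow in the network `(G, T, c)`: `T`-paths `P i` with positive
integer coefficients `α i` such that the total coefficient on each edge is at most
its capacity. -/
structure IMultiflow (G : Multigraph) (T : Finset G.V) (c : G.E → ℕ) where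
  k : ℕ
  P : Fin k → TPath G T
  α : Fin k → ℕ
  hpos : ∀ i, 0 < α i
  hcap : ∀ e : G.E,
    ∑ i ∈ Finset.univ.filter (fun i => e ∈ (P i).edges), α i ≤ c e

namespace IMultiflow

variable {G : Multigraph} {T : Finset G.V} {c : G.E → ℕ}

/-- the load `ζ_𝓕(e)` of an edge. -/
noncomputable def load (𝓕 : IMultiflow G T c) (e : G.E) : ℕ :=
  ∑ i ∈ Finset.univ.filter (fun i => e ∈ (𝓕.P i).edges), 𝓕.α i

/-- the total value of the multiflow. -/
def val (𝓕 : IMultiflow G T c) : ℕ := ∑ i, 𝓕.α i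

end IMultiflow

/-- A fractional (rational) multiflow in the network `(G, T, c)`. -/
structure QMultiflow (G : Multigraph) (T : Finset G.V) (c : G.E → ℕ) where
  k : ℕ
  P : Fin k → TPath G T
  α : Fin k → ℚ
  hpos : ∀ i, 0 < α i
  hcap : ∀ e : G.E,
    ∑ i ∈ Finset.univ.filter (fun i => e ∈ (P i).edges), α i ≤ (c e : ℚ)

namespace QMultiflow

variable {G : Multigraph} {T : Finset G.V} {c : G.E → ℕ}

def val (𝓕 : QMultiflow G T c) : ℚ := ∑ i, 𝓕.α i

end QMultiflow

/-- `d_c(X) = Σ_{e ∈ δ(X)} c(e)`. -/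
noncomputable def Multigraph.dc (G : Multigraph) (c : G.E → ℕ) (X : Set G.V) : ℕ :=
  ∑ e ∈ G.cutE X, c e

namespace TSubpartition

variable {G : Multigraph} {T : Finset G.V}

/-- number of components `K` of `G∖𝒳` with `d_c(K)` odd. -/
noncomputable def oddCompsC (𝒳 : TSubpartition G T) (c : G.E → ℕ) : ℕ :=
  {K : Set G.V | G.IsCompOf 𝒳.rest K ∧ Odd (G.dc c K)}.ncard

/-- `κ_c(𝒳) = (Σ_{s∈T} d_c(X_s) − odd_c(G∖𝒳)) / 2`. -/
noncomputable def kappaC (𝒳 : TSubpartition G T) (c : G.E → ℕ) : ℚ :=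
  (((∑ s ∈ T, G.dc c (𝒳.X s) : ℕ) : ℚ) - ((𝒳.oddCompsC c : ℕ) : ℚ)) / 2

end TSubpartition


/- ------------------------------------------------------------------ -/
/- Auxiliary lemmas for the proof                                      -/
/- ------------------------------------------------------------------ -/

section Aux

open Finset

variable {G : Multigraph} {T : Finset G.V} {c : G.E → ℕ}

lemma MF.sum_biUnion_le {α β : Type*} [DecidableEq α] [DecidableEq β]
    (s : Finset α) (t : α → Finset β) (f : β → ℕ) :
    ∑ x ∈ s.biUnion t, f x ≤ ∑ a ∈ s, ∑ x ∈ t a, f x := by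
  induction s using Finset.induction with
  | empty => simp
  | @insert a s h ih =>
    rw [Finset.biUnion_insert, Finset.sum_insert h]
    calc ∑ x ∈ t a ∪ s.biUnion t, f x
        ≤ ∑ x ∈ t a, f x + ∑ x ∈ s.biUnion t, f x := by
          rw [← Finset.sum_union_inter]; exact Nat.le_add_right _ _
      _ ≤ _ := Nat.add_le_add_left ih _

lemma MF.joins_symm {e : G.E} {u v : G.V} (h : G.Joins e u v) : G.Joins e v u := by
  rcases h with h | h
  · exact Or.inr h
  · exact Or.inl h

lemma MF.joins_self (e : G.E) : G.Joins e (G.src e) (G.tgt e) := Or.inl ⟨rfl, rfl⟩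

lemma MF.mem_cutE_iff {A : Set G.V} {e : G.E} {u v : G.V} (h : G.Joins e u v) :
    e ∈ G.cutE A ↔ ((u ∈ A ∧ v ∉ A) ∨ (u ∉ A ∧ v ∈ A)) := by
  rcases h with ⟨h1, h2⟩ | ⟨h1, h2⟩ <;> simp only [Multigraph.cutE, Finset.mem_filter,
    Finset.mem_univ, true_and, h1, h2] <;> tauto

lemma MF.adjOn_symm {W : Set G.V} : Symmetric (G.adjOn W) := by
  rintro u v ⟨hu, hv, e, he⟩
  exact ⟨hv, hu, e, MF.joins_symm he⟩

lemma MF.comp_subset {W K : Set G.V} (h : G.IsCompOf W K) : K ⊆ W := by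
  obtain ⟨v, hv, rfl⟩ := h
  intro u hu
  induction hu with
  | refl => exact hv
  | tail _ h2 _ => exact h2.2.1

lemma MF.comp_closed {W K : Set G.V} (h : G.IsCompOf W K) {a b : G.V}
    (ha : a ∈ K) (hab : G.adjOn W a b) : b ∈ K := by
  obtain ⟨v, hv, rfl⟩ := h
  exact Relation.ReflTransGen.tail ha hab

lemma MF.comp_eq_of_mem {W K K' : Set G.V} (h : G.IsCompOf W K) (h' : G.IsCompOf W K')
    {u : G.V} (hu : u ∈ K) (hu' : u ∈ K') : K = K' := by
  obtain ⟨v, hv, rfl⟩ := h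
  obtain ⟨v', hv', rfl⟩ := h'
  have hsym : ∀ {a b : G.V}, Relation.ReflTransGen (G.adjOn W) a b →
      Relation.ReflTransGen (G.adjOn W) b a := by
    intro a b h
    induction h with
    | refl => exact Relation.ReflTransGen.refl
    | tail _ hbc ih => exact Relation.ReflTransGen.head (MF.adjOn_symm hbc) ih
  have hvv' : Relation.ReflTransGen (G.adjOn W) v v' := hu.trans (hsym hu')
  ext w
  constructor
  · intro hw
    exact ((hsym hvv').trans hw)
  · intro hw
    exact (hvv'.trans hw)

lemma MF.mem_X_self (𝒳 : TSubpartition G T) {t : G.V} (ht : t ∈ T) : t ∈ 𝒳.X t := by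
  have h := 𝒳.hmem t ht
  have : t ∈ 𝒳.X t ∩ (T : Set G.V) := by rw [h]; rfl
  exact this.1

lemma MF.not_rest_of_X {𝒳 : TSubpartition G T} {s v : G.V} (hs : s ∈ T)
    (hv : v ∈ 𝒳.X s) : v ∉ 𝒳.rest := by
  intro hr
  exact hr (Set.mem_biUnion hs hv)

lemma MF.terminal_not_rest (𝒳 : TSubpartition G T) {t : G.V} (ht : t ∈ T) :
    t ∉ 𝒳.rest := MF.not_rest_of_X ht (MF.mem_X_self 𝒳 ht)

lemma MF.cutE_comp_mem_aux (𝒳 : TSubpartition G T) {K : Set G.V}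
    (hK : G.IsCompOf 𝒳.rest K) {e : G.E} {a b : G.V} (hJ : G.Joins e a b)
    (ha : a ∈ K) (hb : b ∉ K) : ∃ s ∈ T, e ∈ G.cutE (𝒳.X s) := by
  have haR : a ∈ 𝒳.rest := MF.comp_subset hK ha
  have hbR : b ∉ 𝒳.rest := fun hbR => hb (MF.comp_closed hK ha ⟨haR, hbR, e, hJ⟩)
  have hbU : b ∈ ⋃ s ∈ T, 𝒳.X s := by
    by_contra hcon
    exact hbR hcon
  obtain ⟨s, hs, hbs⟩ : ∃ s ∈ T, b ∈ 𝒳.X s := by simpa using hbU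
  refine ⟨s, hs, ?_⟩
  rw [MF.mem_cutE_iff hJ]
  exact Or.inr ⟨fun hmem => (MF.not_rest_of_X hs hmem) haR, hbs⟩

lemma MF.cutE_comp_mem (𝒳 : TSubpartition G T) {K : Set G.V}
    (hK : G.IsCompOf 𝒳.rest K) {e : G.E} (he : e ∈ G.cutE K) :
    ∃ s ∈ T, e ∈ G.cutE (𝒳.X s) := by
  rw [MF.mem_cutE_iff (MF.joins_self e)] at he
  rcases he with ⟨h1, h2⟩ | ⟨h1, h2⟩
  · exact MF.cutE_comp_mem_aux 𝒳 hK (MF.joins_self e) h1 h2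
  · exact MF.cutE_comp_mem_aux 𝒳 hK (MF.joins_symm (MF.joins_self e)) h2 h1

lemma MF.cutE_comp_disjoint {W K K' : Set G.V} (hK : G.IsCompOf W K)
    (hK' : G.IsCompOf W K') (hne : K ≠ K') : Disjoint (G.cutE K) (G.cutE K') := by
  rw [Finset.disjoint_left]
  intro e heK heK'
  have hJ := MF.joins_self (G := G) e
  rw [MF.mem_cutE_iff hJ] at heK heK'
  rcases heK with ⟨h1, h2⟩ | ⟨h1, h2⟩ <;> rcases heK' with ⟨h3, h4⟩ | ⟨h3, h4⟩
  · exact hne (MF.comp_eq_of_mem hK hK' h1 h3)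
  · exact h2 (MF.comp_closed hK h1 ⟨MF.comp_subset hK h1, MF.comp_subset hK' h4, e, hJ⟩)
  · exact h1 (MF.comp_closed hK h2
      ⟨MF.comp_subset hK h2, MF.comp_subset hK' h3, e, MF.joins_symm hJ⟩)
  · exact hne (MF.comp_eq_of_mem hK hK' h2 h4)

/- ---------------- path lemmas ---------------- -/

lemma MF.verts_ne_nil (p : TPath G T) : p.verts ≠ [] := by
  intro h
  have := p.hlen
  rw [h] at this
  simp at this

lemma MF.verts_len_pos (p : TPath G T) : 0 < p.verts.length := by
  rw [p.hlen]; omega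

lemma MF.head_eq_get {α : Type*} (l : List α) (h : l ≠ []) :
    l.head h = l.get ⟨0, List.length_pos_iff.mpr h⟩ := by
  cases l with
  | nil => simp at h
  | cons a l => rfl

lemma MF.first_eq (p : TPath G T) :
    p.first = p.verts.get ⟨0, MF.verts_len_pos p⟩ := by
  have h := p.hfirst
  rw [List.head?_eq_head (MF.verts_ne_nil p)] at h
  have h2 : p.first = p.verts.head (MF.verts_ne_nil p) := (Option.some.inj h).symm
  rw [h2, MF.head_eq_get]

lemma MF.last_eq (p : TPath G T) :
    p.last = p.verts.get ⟨p.verts.length - 1, by have := MF.verts_len_pos p; omega⟩ := by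
  have h := p.hlast
  rw [List.getLast?_eq_getLast (MF.verts_ne_nil p)] at h
  have h2 : p.last = p.verts.getLast (MF.verts_ne_nil p) := (Option.some.inj h).symm
  exact h2.trans (List.getLast_eq_getElem _)

lemma MF.edges_len_pos (p : TPath G T) : 0 < p.edges.length := by
  cases he : p.edges with
  | nil => exact absurd he p.hne
  | cons a l => simp

lemma MF.first_ne_last (p : TPath G T) : p.first ≠ p.last := by
  rw [MF.first_eq, MF.last_eq]
  intro h
  have hinj := List.nodup_iff_injective_get.mp p.nodup
  have h2 := hinj h
  have h3 : (0 : ℕ) = p.verts.length - 1 := congrArg Fin.val h2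
  have h4 := p.hlen
  have h5 := MF.edges_len_pos p
  omega

lemma MF.edges_nodup (p : TPath G T) : p.edges.Nodup := by
  rw [List.nodup_iff_injective_get]
  intro i j hij
  have hinj := List.nodup_iff_injective_get.mp p.nodup
  have h1 := p.hadj i.1 i.2
  have h2 := p.hadj j.1 j.2
  have hi : p.edges.get ⟨i.1, i.2⟩ = p.edges.get i := by congr
  have hjj : p.edges.get ⟨j.1, j.2⟩ = p.edges.get j := by congr
  rw [hi, hij] at h1
  rw [hjj] at h2
  have hvlen := p.hlen
  rcases h1 with ⟨a1, a2⟩ | ⟨a1, a2⟩ <;> rcases h2 with ⟨b1, b2⟩ | ⟨b1, b2⟩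
  · have e1 := hinj (a1.symm.trans b1)
    have : (i : ℕ) = j := by simpa using e1
    exact Fin.ext this
  · have e1 := hinj (a1.symm.trans b1)
    have e2 := hinj (a2.symm.trans b2)
    have c1 : (i : ℕ) = (j : ℕ) + 1 := by simpa using e1
    have c2 : (i : ℕ) + 1 = (j : ℕ) := by simpa using e2
    omega
  · have e1 := hinj (a1.symm.trans b1)
    have e2 := hinj (a2.symm.trans b2)
    have c1 : (i : ℕ) = (j : ℕ) + 1 := by simpa using e2
    have c2 : (i : ℕ) + 1 = (j : ℕ) := by simpa using e1
    omega
  · have e1 := hinj (a1.symm.trans b1)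
    have : (i : ℕ) = j := by simpa using e1
    exact Fin.ext this

/-- vertex-indicator function along a path, valued in `ZMod 2`. -/
noncomputable def MF.gInd (p : TPath G T) (A : Set G.V) (j : ℕ) : ZMod 2 :=
  if h : j < p.verts.length then (if p.verts.get ⟨j, h⟩ ∈ A then 1 else 0) else 0

lemma MF.crossing_parity (p : TPath G T) (A : Set G.V) :
    ((Finset.univ.filter
        (fun j : Fin p.edges.length => p.edges.get j ∈ G.cutE A)).card : ZMod 2)
      = (if p.first ∈ A then (1 : ZMod 2) else 0)
        + (if p.last ∈ A then (1 : ZMod 2) else 0) := by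
  have subadd : ∀ a b : ZMod 2, a - b = a + b := by decide
  have hvlen := p.hlen
  rw [Finset.card_filter]
  push_cast
  have step : ∀ j : Fin p.edges.length,
      (if p.edges.get j ∈ G.cutE A then (1 : ZMod 2) else 0)
        = MF.gInd p A (j.1 + 1) - MF.gInd p A j.1 := by
    intro j
    have hadj := p.hadj j.1 j.2
    have hj1 : (j.1 : ℕ) < p.verts.length := by omega
    have hj2 : (j.1 : ℕ) + 1 < p.verts.length := by omega
    have hi : p.edges.get ⟨j.1, j.2⟩ = p.edges.get j := by congr
    rw [hi] at hadj
    have hcut := MF.mem_cutE_iff (A := A) hadj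
    simp only [hcut]
    unfold MF.gInd
    rw [dif_pos hj1, dif_pos hj2]
    by_cases hA : p.verts.get ⟨j.1, hj1⟩ ∈ A <;>
      by_cases hB : p.verts.get ⟨j.1 + 1, hj2⟩ ∈ A <;>
      simp only [List.get_eq_getElem] at hA hB <;>
      simp [hA, hB] <;> decide
  calc (∑ j : Fin p.edges.length,
          if p.edges.get j ∈ G.cutE A then (1 : ZMod 2) else 0)
      = ∑ j : Fin p.edges.length, (MF.gInd p A (j.1 + 1) - MF.gInd p A j.1) := by
        exact Finset.sum_congr rfl fun j _ => step j
    _ = ∑ j ∈ Finset.range p.edges.length,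
          (MF.gInd p A (j + 1) - MF.gInd p A j) :=
        Fin.sum_univ_eq_sum_range (fun j => MF.gInd p A (j + 1) - MF.gInd p A j) _
    _ = MF.gInd p A p.edges.length - MF.gInd p A 0 :=
        Finset.sum_range_sub (MF.gInd p A) _
    _ = MF.gInd p A p.edges.length + MF.gInd p A 0 := subadd _ _
    _ = _ := by
        have h0 : (0 : ℕ) < p.verts.length := MF.verts_len_pos p
        have hn : p.edges.length < p.verts.length := by omega
        unfold MF.gInd
        rw [dif_pos h0, dif_pos hn]
        have hf : p.verts.get ⟨0, h0⟩ = p.first := (MF.first_eq p).symm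
        have hl : p.verts.get ⟨p.edges.length, hn⟩ = p.last := by
          rw [MF.last_eq p]
          congr 1
          exact Fin.ext (by show p.edges.length = p.verts.length - 1; omega)
        rw [hf, hl, add_comm]

lemma MF.crossing_exists (p : TPath G T) {A : Set G.V}
    (h : (p.first ∈ A ∧ p.last ∉ A) ∨ (p.first ∉ A ∧ p.last ∈ A)) :
    ∃ e ∈ p.edges, e ∈ G.cutE A := by
  have hp := MF.crossing_parity p A
  have hcard : ((Finset.univ.filter
      (fun j : Fin p.edges.length => p.edges.get j ∈ G.cutE A)).card : ZMod 2) = 1 := by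
    rcases h with ⟨h1, h2⟩ | ⟨h1, h2⟩ <;> rw [hp] <;> simp [h1, h2]
  have hne : (Finset.univ.filter
      (fun j : Fin p.edges.length => p.edges.get j ∈ G.cutE A)).card ≠ 0 := by
    intro h0
    rw [h0] at hcard
    simp at hcard
  obtain ⟨j, hj⟩ := Finset.card_ne_zero.mp hne
  rw [Finset.mem_filter] at hj
  exact ⟨p.edges.get j, List.get_mem _ _, hj.2⟩

lemma MF.card_filter_cross (p : TPath G T) (A : Set G.V) :
    ((G.cutE A).filter (fun e => e ∈ p.edges)).card
      = (Finset.univ.filter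
          (fun j : Fin p.edges.length => p.edges.get j ∈ G.cutE A)).card := by
  symm
  apply Finset.card_bij (fun j _ => p.edges.get j)
  · intro j hj
    rw [Finset.mem_filter] at hj ⊢
    exact ⟨hj.2, List.get_mem _ _⟩
  · intro j1 _ j2 _ h
    exact List.nodup_iff_injective_get.mp (MF.edges_nodup p) h
  · intro e he
    rw [Finset.mem_filter] at he
    obtain ⟨j, hje⟩ := List.mem_iff_get.mp he.2
    exact ⟨j, Finset.mem_filter.mpr ⟨Finset.mem_univ _, by rw [hje]; exact he.1⟩, hje⟩

lemma MF.crossing_even (p : TPath G T) {A : Set G.V}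
    (hf : p.first ∉ A) (hl : p.last ∉ A) :
    Even ((G.cutE A).filter (fun e => e ∈ p.edges)).card := by
  rw [MF.card_filter_cross p A]
  have hp := MF.crossing_parity p A
  rw [if_neg hf, if_neg hl, add_zero] at hp
  have := (ZMod.natCast_eq_zero_iff _ 2).mp hp
  exact even_iff_two_dvd.mpr this

/- ---------------- load lemmas ---------------- -/

lemma MF.load_le (𝓕 : IMultiflow G T c) (e : G.E) : 𝓕.load e ≤ c e := 𝓕.hcap e

lemma MF.sum_load_eq (𝓕 : IMultiflow G T c) (A : Finset G.E) :
    ∑ e ∈ A, 𝓕.load e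
      = ∑ i, (A.filter (fun e => e ∈ (𝓕.P i).edges)).card * 𝓕.α i := by
  unfold IMultiflow.load
  calc ∑ e ∈ A, ∑ i ∈ Finset.univ.filter (fun i => e ∈ (𝓕.P i).edges), 𝓕.α i
      = ∑ e ∈ A, ∑ i : Fin 𝓕.k, if e ∈ (𝓕.P i).edges then 𝓕.α i else 0 := by
        refine Finset.sum_congr rfl fun e _ => ?_
        rw [Finset.sum_filter]
    _ = ∑ i : Fin 𝓕.k, ∑ e ∈ A, if e ∈ (𝓕.P i).edges then 𝓕.α i else 0 :=
        Finset.sum_comm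
    _ = ∑ i, (A.filter fun e => e ∈ (𝓕.P i).edges).card * 𝓕.α i := by
        refine Finset.sum_congr rfl fun i _ => ?_
        rw [← Finset.sum_filter, Finset.sum_const, smul_eq_mul]

lemma MF.two_val_le (𝓕 : IMultiflow G T c) (𝒳 : TSubpartition G T) :
    2 * 𝓕.val ≤ ∑ s ∈ T, ∑ e ∈ G.cutE (𝒳.X s), 𝓕.load e := by
  calc 2 * 𝓕.val = ∑ i, 2 * 𝓕.α i := by
        rw [IMultiflow.val, Finset.mul_sum]
    _ ≤ ∑ i, (∑ s ∈ T,
          ((G.cutE (𝒳.X s)).filter fun e => e ∈ (𝓕.P i).edges).card) * 𝓕.α i := by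
        apply Finset.sum_le_sum
        intro i _
        apply Nat.mul_le_mul_right
        set p := 𝓕.P i with hp
        set f : G.V → ℕ :=
          fun s => ((G.cutE (𝒳.X s)).filter fun e => e ∈ p.edges).card with hf
        have hnel : p.last ∉ 𝒳.X p.first := by
          intro hl
          have hmem : p.last ∈ 𝒳.X p.first ∩ (T : Set G.V) := ⟨hl, p.hlastT⟩
          rw [𝒳.hmem p.first p.hfirstT] at hmem
          exact MF.first_ne_last p (Set.mem_singleton_iff.mp hmem).symm
        have hnef : p.first ∉ 𝒳.X p.last := by
          intro hl
          have hmem : p.first ∈ 𝒳.X p.last ∩ (T : Set G.V) := ⟨hl, p.hfirstT⟩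
          rw [𝒳.hmem p.last p.hlastT] at hmem
          exact MF.first_ne_last p (Set.mem_singleton_iff.mp hmem)
        have hfirst : 1 ≤ f p.first := by
          obtain ⟨e, he1, he2⟩ := MF.crossing_exists p (A := 𝒳.X p.first)
            (Or.inl ⟨MF.mem_X_self 𝒳 p.hfirstT, hnel⟩)
          exact Finset.card_pos.mpr ⟨e, Finset.mem_filter.mpr ⟨he2, he1⟩⟩
        have hlast : 1 ≤ f p.last := by
          obtain ⟨e, he1, he2⟩ := MF.crossing_exists p (A := 𝒳.X p.last)
            (Or.inr ⟨hnef, MF.mem_X_self 𝒳 p.hlastT⟩)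
          exact Finset.card_pos.mpr ⟨e, Finset.mem_filter.mpr ⟨he2, he1⟩⟩
        have hsub : ({p.first, p.last} : Finset G.V) ⊆ T := by
          intro x hx
          rcases Finset.mem_insert.mp hx with h | h
          · rw [h]; exact p.hfirstT
          · rw [Finset.mem_singleton.mp h]; exact p.hlastT
        have hge : f p.first + f p.last ≤ ∑ s ∈ T, f s := by
          rw [← Finset.sum_pair (MF.first_ne_last p)]
          exact Finset.sum_le_sum_of_subset hsub
        exact le_trans (by omega) hge
    _ = ∑ s ∈ T, ∑ i, ((G.cutE (𝒳.X s)).filter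
          fun e => e ∈ (𝓕.P i).edges).card * 𝓕.α i := by
        rw [Finset.sum_comm]
        exact Finset.sum_congr rfl fun s _ => by rw [Finset.sum_mul]
    _ = ∑ s ∈ T, ∑ e ∈ G.cutE (𝒳.X s), 𝓕.load e :=
        Finset.sum_congr rfl fun s _ => (MF.sum_load_eq 𝓕 _).symm

lemma MF.odd_le_slack (𝓕 : IMultiflow G T c) (𝒳 : TSubpartition G T) :
    𝒳.oddCompsC c ≤ ∑ s ∈ T, ∑ e ∈ G.cutE (𝒳.X s), (c e - 𝓕.load e) := by
  set slack : G.E → ℕ := fun e => c e - 𝓕.load e with hslack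
  have hfin : {K : Set G.V | G.IsCompOf 𝒳.rest K ∧ Odd (G.dc c K)}.Finite :=
    Set.toFinite _
  set F := hfin.toFinset with hF
  have hodd : 𝒳.oddCompsC c = F.card := Set.ncard_eq_toFinset_card _ hfin
  have hmemF : ∀ K ∈ F, G.IsCompOf 𝒳.rest K ∧ Odd (G.dc c K) :=
    fun K hK => hfin.mem_toFinset.mp hK
  have hone : ∀ K ∈ F, 1 ≤ ∑ e ∈ G.cutE K, slack e := by
    intro K hK
    obtain ⟨hKc, hKodd⟩ := hmemF K hK
    by_contra hcon
    push_neg at hcon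
    have hzero : ∑ e ∈ G.cutE K, slack e = 0 := by omega
    have hdc : G.dc c K = ∑ e ∈ G.cutE K, 𝓕.load e + ∑ e ∈ G.cutE K, slack e := by
      rw [Multigraph.dc, ← Finset.sum_add_distrib]
      exact Finset.sum_congr rfl fun e _ =>
        (Nat.add_sub_cancel' (MF.load_le 𝓕 e)).symm
    have heven : Even (∑ e ∈ G.cutE K, 𝓕.load e) := by
      rw [MF.sum_load_eq]
      apply Finset.even_sum
      intro i _
      have hfK : (𝓕.P i).first ∉ K := fun h =>
        MF.terminal_not_rest 𝒳 (𝓕.P i).hfirstT (MF.comp_subset hKc h)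
      have hlK : (𝓕.P i).last ∉ K := fun h =>
        MF.terminal_not_rest 𝒳 (𝓕.P i).hlastT (MF.comp_subset hKc h)
      exact (MF.crossing_even (𝓕.P i) hfK hlK).mul_right _
    have : Even (G.dc c K) := by
      rw [hdc, hzero, add_zero]
      exact heven
    exact (Nat.not_odd_iff_even.mpr this) hKodd
  have hdisj : (F : Set (Set G.V)).PairwiseDisjoint (fun K => G.cutE K) := by
    intro K hK K' hK' hne
    obtain ⟨hKc, _⟩ := hmemF K (by exact hK)
    obtain ⟨hKc', _⟩ := hmemF K' (by exact hK')
    exact MF.cutE_comp_disjoint hKc hKc' hne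
  have hsub : F.biUnion (fun K => G.cutE K) ⊆ T.biUnion fun s => G.cutE (𝒳.X s) := by
    intro e he
    obtain ⟨K, hK, heK⟩ := Finset.mem_biUnion.mp he
    obtain ⟨hKc, _⟩ := hmemF K hK
    obtain ⟨s, hs, hes⟩ := MF.cutE_comp_mem 𝒳 hKc heK
    exact Finset.mem_biUnion.mpr ⟨s, hs, hes⟩
  calc 𝒳.oddCompsC c = F.card := hodd
    _ = ∑ K ∈ F, 1 := by rw [Finset.sum_const, smul_eq_mul, mul_one]
    _ ≤ ∑ K ∈ F, ∑ e ∈ G.cutE K, slack e := Finset.sum_le_sum hone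
    _ = ∑ e ∈ F.biUnion (fun K => G.cutE K), slack e :=
        (Finset.sum_biUnion hdisj).symm
    _ ≤ ∑ e ∈ T.biUnion (fun s => G.cutE (𝒳.X s)), slack e :=
        Finset.sum_le_sum_of_subset hsub
    _ ≤ ∑ s ∈ T, ∑ e ∈ G.cutE (𝒳.X s), slack e :=
        MF.sum_biUnion_le T _ slack

end Aux

/-- The value of any integral multiflow is at most
`κ_c(𝒳) = (Σ_{s∈T} d_c(X_s) − odd_c(G∖𝒳)) / 2` for every `T`-subpartition `𝒳`. -/
theorem imultiflow_val_le_kappaC (G : Multigraph) (T : Finset G.V)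
    (c : G.E → ℕ) (𝓕 : IMultiflow G T c) (𝒳 : TSubpartition G T) :
    (𝓕.val : ℚ) ≤ 𝒳.kappaC c := by
  have hA := MF.two_val_le 𝓕 𝒳
  have hB := MF.odd_le_slack 𝓕 𝒳
  have hkey : 2 * 𝓕.val + 𝒳.oddCompsC c ≤ ∑ s ∈ T, G.dc c (𝒳.X s) := by
    calc 2 * 𝓕.val + 𝒳.oddCompsC c
        ≤ (∑ s ∈ T, ∑ e ∈ G.cutE (𝒳.X s), 𝓕.load e)
          + ∑ s ∈ T, ∑ e ∈ G.cutE (𝒳.X s), (c e - 𝓕.load e) := Nat.add_le_add hA hB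
      _ = ∑ s ∈ T, G.dc c (𝒳.X s) := by
          rw [← Finset.sum_add_distrib]
          refine Finset.sum_congr rfl fun s _ => ?_
          rw [Multigraph.dc, ← Finset.sum_add_distrib]
          exact Finset.sum_congr rfl fun e _ =>
            Nat.add_sub_cancel' (MF.load_le 𝓕 e)
  rw [TSubpartition.kappaC]
  have h2 : ((2 * 𝓕.val + 𝒳.oddCompsC c : ℕ) : ℚ)
      ≤ ((∑ s ∈ T, G.dc c (𝒳.X s) : ℕ) : ℚ) := by exact_mod_cast hkey
  push_cast at h2 ⊢
  linarith
end
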